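/- arXiv:1611.07255 — 2 statements merged into one kernel-verified Lean document; each statement's English description precedes it below -/
import Mathlib

section
/- Any head v-reduction sequence can be rearranged: if M head-v-reduces (in several steps, mixing head β_v and head σ steps) to M', then there exists N such that M head-β_v-reduces (several steps) to N and N head-σ-reduces (several steps) to M'. -/
/-- Terms of the call-by-value λ-calculus, in de Bruijn notation. -/
inductive Term : Type
  | var : ℕ → Term
  | lam : Term → Term
  | app : Term → Term → Term

namespace Term

/-- Values are variables and abstractions. -/
def isValue : Term → Prop
  | var _ => True
  | lam _ => True
  | app _ _ => False

/-- Shift free de Bruijn indices ≥ d by one. -/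
def lift (d : ℕ) : Term → Term
  | var n => if n < d then var n else var (n+1)
  | lam M => lam (lift (d+1) M)
  | app M N => app (lift d M) (lift d N)

/-- Capture-avoiding substitution of `V` for index `k`. -/
def subst : Term → ℕ → Term → Term
  | var n, k, V => if n = k then V else if k < n then var (n-1) else var n
  | lam M, k, V => lam (subst M (k+1) (lift 0 V))
  | app M N, k, V => app (subst M k V) (subst N k V)

/-- Apply a term to a list of arguments: `appList M [M₁,…,Mₘ] = M M₁ … Mₘ`. -/
def appList : Term → List Term → Term
  | M, [] => M
  | M, N :: Ns => appList (app M N) Ns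

/-- Root σ-reduction rules σ₁ and σ₃ (freshness handled by lifting). -/
inductive SigmaBase : Term → Term → Prop
  | sigma1 (M N L : Term) :
      SigmaBase (app (app (lam M) N) L) (app (lam (app M (lift 0 L))) N)
  | sigma3 (V L N : Term) : isValue V →
      SigmaBase (app V (app (lam L) N)) (app (lam (app (lift 0 V) L)) N)

/-- Root rules of v-reduction: β_v, σ₁ and σ₃. -/
inductive VBase : Term → Term → Prop
  | beta (M V : Term) : isValue V → VBase (app (lam M) V) (subst M 0 V)
  | sigma1 (M N L : Term) :
      VBase (app (app (lam M) N) L) (app (lam (app M (lift 0 L))) N)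
  | sigma3 (V L N : Term) : isValue V →
      VBase (app V (app (lam L) N)) (app (lam (app (lift 0 V) L)) N)

/-- Contextual closure of a root relation. -/
inductive Ctx (r : Term → Term → Prop) : Term → Term → Prop
  | base {M M'} : r M M' → Ctx r M M'
  | lam {M M'} : Ctx r M M' → Ctx r (lam M) (lam M')
  | appL {M M'} (N : Term) : Ctx r M M' → Ctx r (app M N) (app M' N)
  | appR (M : Term) {N N'} : Ctx r N N' → Ctx r (app M N) (app M N')

/-- σ-reduction: contextual closure of σ₁ ∪ σ₃. -/
def SigmaRed : Term → Term → Prop := Ctx SigmaBase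

/-- v-reduction: contextual closure of β_v ∪ σ₁ ∪ σ₃. -/
def Red : Term → Term → Prop := Ctx VBase

/-- Head β_v-reduction. -/
inductive HeadBeta : Term → Term → Prop
  | beta (M V : Term) (Ms : List Term) : isValue V →
      HeadBeta (appList (app (lam M) V) Ms) (appList (subst M 0 V) Ms)
  | right (V : Term) {N N'} (Ms : List Term) : isValue V → HeadBeta N N' →
      HeadBeta (appList (app V N) Ms) (appList (app V N') Ms)

/-- Head σ-reduction. -/
inductive HeadSigma : Term → Term → Prop
  | sigma1 (M N L : Term) (Ms : List Term) :
      HeadSigma (appList (app (app (lam M) N) L) Ms)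
                (appList (app (lam (app M (lift 0 L))) N) Ms)
  | sigma3 (V L N : Term) (Ms : List Term) : isValue V →
      HeadSigma (appList (app V (app (lam L) N)) Ms)
                (appList (app (lam (app (lift 0 V) L)) N) Ms)
  | right (V : Term) {N N'} (Ms : List Term) : isValue V → HeadSigma N N' →
      HeadSigma (appList (app V N) Ms) (appList (app V N') Ms)

/-- Head v-reduction: head β_v ∪ head σ. -/
def HeadRed (M N : Term) : Prop := HeadBeta M N ∨ HeadSigma M N

/-- Internal v-reduction: v-steps that are not head v-steps. -/
def IntRed (M N : Term) : Prop := Red M N ∧ ¬ HeadRed M N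

/-- Parallel reduction of the shuffling calculus λ_v^σ. -/
inductive Par : Term → Term → Prop
  | var (x : ℕ) {Ms Ms' : List Term} : List.Forall₂ Par Ms Ms' →
      Par (appList (var x) Ms) (appList (var x) Ms')
  | lam {M M'} {Ms Ms' : List Term} : Par M M' → List.Forall₂ Par Ms Ms' →
      Par (appList (lam M) Ms) (appList (lam M') Ms')
  | beta {M M' V V'} {Ms Ms' : List Term} : isValue V → isValue V' →
      Par M M' → Par V V' → List.Forall₂ Par Ms Ms' →
      Par (appList (app (lam M) V) Ms) (appList (subst M' 0 V') Ms')
  | sigma1 {M M' N N' L L'} {Ms Ms' : List Term} :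
      Par M M' → Par N N' → Par L L' → List.Forall₂ Par Ms Ms' →
      Par (appList (app (app (lam M) N) L) Ms)
          (appList (app (lam (app M' (lift 0 L'))) N') Ms')
  | sigma3 {V V' L L' N N'} {Ms Ms' : List Term} : isValue V → isValue V' →
      Par V V' → Par L L' → Par N N' → List.Forall₂ Par Ms Ms' →
      Par (appList (app V (app (lam L) N)) Ms)
          (appList (app (lam (app (lift 0 V') L')) N') Ms')

/-- Internal parallel reduction. -/
inductive IPar : Term → Term → Prop
  | lam {N N'} : Par N N' → IPar (lam N) (lam N')
  | var (x : ℕ) : IPar (var x) (var x)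
  | right {V V' N N'} {Ms Ms' : List Term} : isValue V → isValue V' →
      Par V V' → IPar N N' → List.Forall₂ Par Ms Ms' →
      IPar (appList (app V N) Ms) (appList (app V' N') Ms')

/-- One-hole contexts. -/
inductive Ctx1 : Type
  | hole : Ctx1
  | lam : Ctx1 → Ctx1
  | appL : Ctx1 → Term → Ctx1
  | appR : Term → Ctx1 → Ctx1

/-- Capture-allowing hole filling. -/
def fill : Ctx1 → Term → Term
  | .hole, M => M
  | .lam C, M => lam (fill C M)
  | .appL C N, M => app (fill C M) N
  | .appR N C, M => app N (fill C M)

/-- `M` halts: head β_v-reduction from `M` reaches a value. -/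
def Halts (M : Term) : Prop := ∃ V, isValue V ∧ Relation.ReflTransGen HeadBeta M V

end Term


/-!
Head σ-steps can be postponed after head β_v-steps. Both relations are closures of root rules
under the evaluation contexts `E ::= [·] | E L | V E`, and a head σ-step followed by a head
β_v-step can be replaced by a head β_v-step followed by at most one head σ-step: σ only
regroups an application, so the β_v-redex fired after it was already present before it, and a
σ-reduct, being an application, is never the value a β_v-step needs. Postponement for a
reflexive-transitive closure then follows from this local swap by the usual induction.
-/

namespace Relation

variable {α : Type*} {a b : α → α → Prop}

theorem ReflGen.lift {β : Type*} {p : β → β → Prop} (f : α → β)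
    (h : ∀ x y, a x y → p (f x) (f y)) {x y : α} (hxy : ReflGen a x y) :
    ReflGen p (f x) (f y) := by
  cases hxy with
  | refl => exact .refl
  | single hxy => exact .single (h _ _ hxy)

theorem ReflTransGen.postpone_step
    (swap : ∀ {x y z}, b x y → a y z → ∃ w, a x w ∧ ReflGen b w z) {x y z : α}
    (hb : ReflTransGen b x y) (ha : a y z) : ∃ w, a x w ∧ ReflTransGen b w z := by
  induction hb using ReflTransGen.head_induction_on generalizing z with
  | refl => exact ⟨z, ha, .refl⟩
  | head hb _ ih =>
      obtain ⟨w₁, ha₁, hb₁⟩ := ih ha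
      obtain ⟨w, ha', hb'⟩ := swap hb ha₁
      exact ⟨w, ha', hb'.to_reflTransGen.trans hb₁⟩

theorem ReflTransGen.postpone
    (swap : ∀ {x y z}, b x y → a y z → ∃ w, a x w ∧ ReflGen b w z) {x z : α}
    (h : ReflTransGen (fun x y => a x y ∨ b x y) x z) :
    ∃ y, ReflTransGen a x y ∧ ReflTransGen b y z := by
  induction h with
  | refl => exact ⟨x, .refl, .refl⟩
  | tail _ hstep ih =>
      obtain ⟨y, hay, hby⟩ := ih
      rcases hstep with ha | hb
      · obtain ⟨w, haw, hbw⟩ := hby.postpone_step swap ha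
        exact ⟨w, hay.tail haw, hbw⟩
      · exact ⟨y, hay, hby.tail hb⟩

end Relation

namespace Term

theorem appList_append (M : Term) (Ms Ns : List Term) :
    appList M (Ms ++ Ns) = appList (appList M Ms) Ns := by
  induction Ms generalizing M with
  | nil => rfl
  | cons N Ms ih => exact ih (app M N)

theorem appList_concat (M L : Term) (Ms : List Term) :
    appList M (Ms ++ [L]) = app (appList M Ms) L := by
  rw [appList_append]; rfl

theorem subst_lift : ∀ (L : Term) (k : ℕ) (V : Term), subst (lift k L) k V = L
  | var n, k, V => by
      by_cases h : n < k
      · simp [lift, subst, h, Nat.ne_of_lt h, Nat.lt_asymm h]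
      · have hne : n + 1 ≠ k := by omega
        have hlt : k < n + 1 := by omega
        simp [lift, subst, h, hne, hlt]
  | lam M, k, V => by simp [lift, subst, subst_lift M]
  | app M N, k, V => by simp [lift, subst, subst_lift M, subst_lift N]

inductive BetaBase : Term → Term → Prop
  | beta (M V : Term) : isValue V → BetaBase (app (lam M) V) (subst M 0 V)

inductive EvalClosure (r : Term → Term → Prop) : Term → Term → Prop
  | base {M M'} : r M M' → EvalClosure r M M'
  | appL {M M'} (L : Term) : EvalClosure r M M' → EvalClosure r (app M L) (app M' L)
  | appR {V N N'} : isValue V → EvalClosure r N N' → EvalClosure r (app V N) (app V N')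

namespace EvalClosure

variable {r : Term → Term → Prop}

theorem appList {M M' : Term} (Ms : List Term) (h : EvalClosure r M M') :
    EvalClosure r (Term.appList M Ms) (Term.appList M' Ms) := by
  induction Ms generalizing M M' with
  | nil => exact h
  | cons N Ms ih => exact ih (h.appL N)

theorem not_isValue_left (hr : ∀ {M M'}, r M M' → ¬ isValue M) {M M' : Term}
    (h : EvalClosure r M M') : ¬ isValue M := by
  cases h with
  | base h => exact hr h
  | appL => exact id
  | appR => exact id

theorem not_isValue_right (hr : ∀ {M M'}, r M M' → ¬ isValue M') {M M' : Term}
    (h : EvalClosure r M M') : ¬ isValue M' := by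
  cases h with
  | base h => exact hr h
  | appL => exact id
  | appR => exact id

end EvalClosure

theorem BetaBase.not_isValue_left {M M' : Term} (h : BetaBase M M') : ¬ isValue M := by
  cases h; exact id

theorem SigmaBase.not_isValue_right {M M' : Term} (h : SigmaBase M M') : ¬ isValue M' := by
  cases h <;> exact id

theorem HeadBeta.appL {M M' : Term} (L : Term) (h : HeadBeta M M') :
    HeadBeta (app M L) (app M' L) := by
  cases h with
  | beta M V Ms hv => simpa only [appList_concat] using HeadBeta.beta M V (Ms ++ [L]) hv
  | right V Ms hv h => simpa only [appList_concat] using HeadBeta.right V (Ms ++ [L]) hv h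

theorem HeadSigma.appL {M M' : Term} (L : Term) (h : HeadSigma M M') :
    HeadSigma (app M L) (app M' L) := by
  cases h with
  | sigma1 M N L₀ Ms => simpa only [appList_concat] using HeadSigma.sigma1 M N L₀ (Ms ++ [L])
  | sigma3 V L₀ N Ms hv =>
      simpa only [appList_concat] using HeadSigma.sigma3 V L₀ N (Ms ++ [L]) hv
  | right V Ms hv h => simpa only [appList_concat] using HeadSigma.right V (Ms ++ [L]) hv h

theorem headBeta_iff {M M' : Term} : HeadBeta M M' ↔ EvalClosure BetaBase M M' := by
  constructor
  · intro h
    induction h with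
    | beta M V Ms hv => exact (EvalClosure.base (BetaBase.beta M V hv)).appList Ms
    | right V Ms hv _ ih => exact (EvalClosure.appR hv ih).appList Ms
  · intro h
    induction h with
    | base h => cases h with | beta M V hv => exact HeadBeta.beta M V [] hv
    | appL L _ ih => exact ih.appL L
    | appR hv _ ih => exact HeadBeta.right _ [] hv ih

theorem headSigma_iff {M M' : Term} : HeadSigma M M' ↔ EvalClosure SigmaBase M M' := by
  constructor
  · intro h
    induction h with
    | sigma1 M N L Ms => exact (EvalClosure.base (SigmaBase.sigma1 M N L)).appList Ms
    | sigma3 V L N Ms hv => exact (EvalClosure.base (SigmaBase.sigma3 V L N hv)).appList Ms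
    | right V Ms hv _ ih => exact (EvalClosure.appR hv ih).appList Ms
  · intro h
    induction h with
    | base h =>
        cases h with
        | sigma1 M N L => exact HeadSigma.sigma1 M N L []
        | sigma3 V L N hv => exact HeadSigma.sigma3 V L N [] hv
    | appL L _ ih => exact ih.appL L
    | appR hv _ ih => exact HeadSigma.right _ [] hv ih

theorem sigma_beta_swap {M N P : Term} (hs : EvalClosure SigmaBase M N)
    (hb : EvalClosure BetaBase N P) :
    ∃ Q, EvalClosure BetaBase M Q ∧ Relation.ReflGen (EvalClosure SigmaBase) Q P := by
  induction hs generalizing P with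
  | base hσ =>
      cases hσ with
      | sigma1 M₀ N₀ L =>
          rcases hb with ⟨⟨_, _, hv⟩⟩ | ⟨_, h⟩ | ⟨_, h⟩
          · refine ⟨_, .appL L (.base (.beta M₀ N₀ hv)), ?_⟩
            simp only [subst, subst_lift]
            exact .refl
          · exact absurd trivial (h.not_isValue_left BetaBase.not_isValue_left)
          · exact ⟨_, .appL L (.appR trivial h), .single (.base (.sigma1 _ _ _))⟩
      | sigma3 V L N₀ hV =>
          rcases hb with ⟨⟨_, _, hv⟩⟩ | ⟨_, h⟩ | ⟨_, h⟩
          · refine ⟨_, .appR hV (.base (.beta L N₀ hv)), ?_⟩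
            simp only [subst, subst_lift]
            exact .refl
          · exact absurd trivial (h.not_isValue_left BetaBase.not_isValue_left)
          · exact ⟨_, .appR hV (.appR trivial h), .single (.base (.sigma3 _ _ _ hV))⟩
  | appL L hs ih =>
      have hs_right := hs.not_isValue_right SigmaBase.not_isValue_right
      rcases hb with ⟨⟨_, _, _⟩⟩ | ⟨_, hb⟩ | ⟨hv, _⟩
      · exact absurd trivial hs_right
      · obtain ⟨Q, hbQ, hsQ⟩ := ih hb
        exact ⟨_, hbQ.appL L, hsQ.lift (app · L) (fun _ _ => EvalClosure.appL L)⟩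
      · exact absurd hv hs_right
  | appR hV hs ih =>
      have hs_right := hs.not_isValue_right SigmaBase.not_isValue_right
      rcases hb with ⟨⟨_, _, hv⟩⟩ | ⟨_, hb⟩ | ⟨_, hb⟩
      · exact absurd hv hs_right
      · exact absurd hV (hb.not_isValue_left BetaBase.not_isValue_left)
      · obtain ⟨Q, hbQ, hsQ⟩ := ih hb
        exact ⟨_, hbQ.appR hV, hsQ.lift (app _) (fun _ _ => EvalClosure.appR hV)⟩

theorem headSigma_headBeta_swap {M N P : Term} (hs : HeadSigma M N) (hb : HeadBeta N P) :
    ∃ Q, HeadBeta M Q ∧ Relation.ReflGen HeadSigma Q P := by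
  obtain ⟨Q, hbQ, hsQ⟩ := sigma_beta_swap (headSigma_iff.1 hs) (headBeta_iff.1 hb)
  exact ⟨Q, headBeta_iff.2 hbQ, hsQ.mono (fun _ _ => headSigma_iff.2)⟩

end Term

open Term Relation in
theorem head_sequentialize {M M2 : Term} (h : ReflTransGen HeadRed M M2) :
    ∃ N, ReflTransGen HeadBeta M N ∧ ReflTransGen HeadSigma N M2 :=
  h.postpone headSigma_headBeta_swap
end

section
/- Substitution lemma for internal parallel reduction: if M ⇛ⁱ M' and V ⇛ⁱ V' (V, V' values), then M{V/x} ⇛ⁱ M'{V'/x}. -/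
namespace Term

lemma subst_lift_s14 (M : Term) : ∀ i X, subst (lift i M) i X = M := by
  induction M with
  | var n =>
      intro i X; simp only [lift]; split_ifs <;> simp only [subst] <;>
        split_ifs <;> first | rfl | (exfalso; omega) | (congr 1; omega)
  | lam M ih => intro i X; simp only [lift, subst, ih]
  | app M N ihM ihN => intro i X; simp only [lift, subst, ihM, ihN]

lemma lift_lift (M : Term) : ∀ i j, i ≤ j →
    lift i (lift j M) = lift (j+1) (lift i M) := by
  induction M with
  | var n =>
      intro i j h; simp only [lift]; split_ifs <;> simp only [lift] <;>
        split_ifs <;> first | rfl | (exfalso; omega) | (congr 1; omega)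
  | lam M ih =>
      intro i j h; simp only [lift]; rw [ih _ _ (by omega)]
  | app M N ihM ihN =>
      intro i j h; simp only [lift]; rw [ihM _ _ h, ihN _ _ h]

lemma lift_subst_le (M : Term) : ∀ i k (V : Term), i ≤ k →
    lift i (subst M k V) = subst (lift i M) (k+1) (lift i V) := by
  induction M with
  | var n =>
      intro i k V h; simp only [subst, lift]; split_ifs <;>
        simp only [subst, lift] <;> split_ifs <;>
        first | rfl | (exfalso; omega) | (congr 1; omega)
  | lam M ih =>
      intro i k V h
      simp only [subst, lift]
      rw [ih (i+1) (k+1) _ (by omega), lift_lift V 0 i (by omega)]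
  | app M N ihM ihN =>
      intro i k V h; simp only [subst, lift]; rw [ihM _ _ _ h, ihN _ _ _ h]

lemma lift_subst_ge (M : Term) : ∀ i k (V : Term), k ≤ i →
    lift i (subst M k V) = subst (lift (i+1) M) k (lift i V) := by
  induction M with
  | var n =>
      intro i k V h; simp only [subst, lift]; split_ifs <;>
        simp only [subst, lift] <;> split_ifs <;>
        first | rfl | (exfalso; omega) | (congr 1; omega)
  | lam M ih =>
      intro i k V h
      simp only [subst, lift]
      rw [ih (i+1) (k+1) _ (by omega), lift_lift V 0 i (by omega)]
  | app M N ihM ihN =>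
      intro i k V h; simp only [subst, lift]; rw [ihM _ _ _ h, ihN _ _ _ h]

lemma subst_subst (M : Term) : ∀ i k (W V : Term), i ≤ k →
    subst (subst M i W) k V = subst (subst M (k+1) (lift i V)) i (subst W k V) := by
  induction M with
  | var n =>
      intro i k W V h; simp only [subst]; split_ifs <;>
        (try simp only [subst]) <;> (try split_ifs) <;>
        first | rfl | (exfalso; omega) | (congr 1; omega) | (rw [subst_lift_s14])
  | lam M ih =>
      intro i k W V h
      simp only [subst]
      rw [ih (i+1) (k+1) _ _ (by omega), lift_lift V 0 i (by omega),
        lift_subst_le W 0 k V (by omega)]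
  | app M N ihM ihN =>
      intro i k W V h; simp only [subst]; rw [ihM _ _ _ _ h, ihN _ _ _ _ h]

end Term

namespace Term

lemma appList_cons (M N : Term) (Ns : List Term) :
    appList M (N :: Ns) = appList (app M N) Ns := rfl

lemma subst_appList (Ms : List Term) : ∀ (M : Term) (k : ℕ) (V : Term),
    subst (appList M Ms) k V = appList (subst M k V) (Ms.map (fun T => subst T k V)) := by
  induction Ms with
  | nil => intro M k V; rfl
  | cons N Ns ih => intro M k V; simp only [appList, List.map, ih, subst]

lemma lift_appList (Ms : List Term) : ∀ (M : Term) (d : ℕ),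
    lift d (appList M Ms) = appList (lift d M) (Ms.map (lift d)) := by
  induction Ms with
  | nil => intro M d; rfl
  | cons N Ns ih => intro M d; simp only [appList, List.map, ih, lift]

lemma appList_eq_var {Ms : List Term} : ∀ {M : Term} {x : ℕ},
    appList M Ms = var x → M = var x ∧ Ms = [] := by
  induction Ms with
  | nil => intro M x h; exact ⟨h, rfl⟩
  | cons N Ns ih => intro M x h; obtain ⟨h1, -⟩ := ih h; cases h1

lemma appList_eq_lam {Ms : List Term} : ∀ {M B : Term},
    appList M Ms = lam B → M = lam B ∧ Ms = [] := by
  induction Ms with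
  | nil => intro M B h; exact ⟨h, rfl⟩
  | cons N Ns ih => intro M B h; obtain ⟨h1, -⟩ := ih h; cases h1

lemma isValue_lift {V : Term} (h : isValue V) (d : ℕ) : isValue (lift d V) := by
  cases V with
  | var n => simp only [lift]; split_ifs <;> trivial
  | lam M => trivial
  | app M N => exact h.elim

lemma isValue_subst {W : Term} (hW : isValue W) {V : Term} (hV : isValue V) (k : ℕ) :
    isValue (subst W k V) := by
  cases W with
  | var n => simp only [subst]; split_ifs <;> trivial
  | lam M => trivial
  | app M N => exact hW.elim

lemma par_var_inv {A B : Term} (h : Par A B) : ∀ x, A = var x → B = var x := by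
  cases h with
  | var y hMs =>
      intro x hA
      obtain ⟨h1, h2⟩ := appList_eq_var hA
      cases h1; subst h2
      cases List.forall₂_nil_left_iff.mp hMs
      rfl
  | lam _ _ => intro x hA; obtain ⟨h1, -⟩ := appList_eq_var hA; cases h1
  | beta _ _ _ _ _ => intro x hA; obtain ⟨h1, -⟩ := appList_eq_var hA; cases h1
  | sigma1 _ _ _ _ => intro x hA; obtain ⟨h1, -⟩ := appList_eq_var hA; cases h1
  | sigma3 _ _ _ _ _ _ => intro x hA; obtain ⟨h1, -⟩ := appList_eq_var hA; cases h1

lemma par_lam_inv {A B : Term} (h : Par A B) : ∀ M, A = lam M →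
    ∃ M', B = lam M' ∧ Par M M' := by
  cases h with
  | var y hMs => intro M hA; obtain ⟨h1, -⟩ := appList_eq_lam hA; cases h1
  | lam hM hMs =>
      intro M hA
      obtain ⟨h1, h2⟩ := appList_eq_lam hA
      cases h1; subst h2
      cases List.forall₂_nil_left_iff.mp hMs
      exact ⟨_, rfl, hM⟩
  | beta _ _ _ _ _ => intro M hA; obtain ⟨h1, -⟩ := appList_eq_lam hA; cases h1
  | sigma1 _ _ _ _ => intro M hA; obtain ⟨h1, -⟩ := appList_eq_lam hA; cases h1
  | sigma3 _ _ _ _ _ _ => intro M hA; obtain ⟨h1, -⟩ := appList_eq_lam hA; cases h1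

lemma par_appList {V V' : Term} (hV : isValue V) (h : Par V V')
    {Ms Ms' : List Term} (hMs : List.Forall₂ Par Ms Ms') :
    Par (appList V Ms) (appList V' Ms') := by
  cases V with
  | var x =>
      have := par_var_inv h x rfl; subst this
      exact Par.var x hMs
  | lam M =>
      obtain ⟨M', hB, hMM'⟩ := par_lam_inv h M rfl
      subst hB
      exact Par.lam hMM' hMs
  | app _ _ => exact hV.elim

end Term

namespace Term

lemma par_lift {M M' : Term} (h : Par M M') : ∀ d, Par (lift d M) (lift d M') := by
  induction h using Par.rec
    (motive_2 := fun Ms Ms' _ => ∀ d,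
      List.Forall₂ Par (Ms.map (lift d)) (Ms'.map (lift d))) with
  | var x hMs ihMs =>
      intro d
      rw [lift_appList, lift_appList]
      obtain ⟨y, hy⟩ : ∃ y, lift d (var x) = var y := by
        simp only [lift]; split_ifs <;> exact ⟨_, rfl⟩
      rw [hy]
      exact Par.var y (ihMs d)
  | lam hM hMs ihM ihMs =>
      intro d
      rw [lift_appList, lift_appList]
      simp only [lift]
      exact Par.lam (ihM (d+1)) (ihMs d)
  | beta hV hV' hM hV2 hMs ihM ihV ihMs =>
      intro d
      rw [lift_appList, lift_appList]
      simp only [lift]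
      rw [lift_subst_ge _ d 0 _ (by omega)]
      exact Par.beta (isValue_lift hV d) (isValue_lift hV' d) (ihM (d+1)) (ihV d) (ihMs d)
  | sigma1 hM hN hL hMs ihM ihN ihL ihMs =>
      intro d
      rw [lift_appList, lift_appList]
      simp only [lift]
      rw [← lift_lift _ 0 d (by omega)]
      exact Par.sigma1 (ihM (d+1)) (ihN d) (ihL d) (ihMs d)
  | sigma3 hV hV' hVp hL hN hMs ihV ihL ihN ihMs =>
      intro d
      rw [lift_appList, lift_appList]
      simp only [lift]
      rw [← lift_lift _ 0 d (by omega)]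
      exact Par.sigma3 (isValue_lift hV d) (isValue_lift hV' d) (ihV d) (ihL (d+1)) (ihN d) (ihMs d)
  | nil => exact List.Forall₂.nil
  | cons hab hl ihab ihl => exact List.Forall₂.cons (ihab _) (ihl _)

end Term

namespace Term

lemma par_subst {M M' : Term} (h : Par M M') :
    ∀ (k : ℕ) {U U' : Term}, isValue U → isValue U' → Par U U' →
      Par (subst M k U) (subst M' k U') := by
  induction h using Par.rec
    (motive_2 := fun Ms Ms' _ => ∀ (k : ℕ) {U U' : Term},
      isValue U → isValue U' → Par U U' →
      List.Forall₂ Par (Ms.map (fun T => subst T k U)) (Ms'.map (fun T => subst T k U'))) with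
  | var x hMs ihMs =>
      intro k U U' hU hU' hUU
      rw [subst_appList, subst_appList]
      by_cases hx : x = k
      · simp only [subst, if_pos hx]
        exact par_appList hU hUU (ihMs k hU hU' hUU)
      · simp only [subst, if_neg hx]
        split_ifs with h
        · exact Par.var (x-1) (ihMs k hU hU' hUU)
        · exact Par.var x (ihMs k hU hU' hUU)
  | lam hM hMs ihM ihMs =>
      intro k U U' hU hU' hUU
      rw [subst_appList, subst_appList]
      simp only [subst]
      exact Par.lam (ihM (k+1) (isValue_lift hU 0) (isValue_lift hU' 0) (par_lift hUU 0))
        (ihMs k hU hU' hUU)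
  | beta hV hV' hM hV2 hMs ihM ihV ihMs =>
      intro k U U' hU hU' hUU
      rw [subst_appList, subst_appList]
      simp only [subst]
      rw [subst_subst _ 0 k _ _ (by omega)]
      exact Par.beta (isValue_subst hV hU k) (isValue_subst hV' hU' k)
        (ihM (k+1) (isValue_lift hU 0) (isValue_lift hU' 0) (par_lift hUU 0))
        (ihV k hU hU' hUU) (ihMs k hU hU' hUU)
  | sigma1 hM hN hL hMs ihM ihN ihL ihMs =>
      intro k U U' hU hU' hUU
      rw [subst_appList, subst_appList]
      simp only [subst]
      rw [← lift_subst_le _ 0 k _ (by omega)]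
      exact Par.sigma1
        (ihM (k+1) (isValue_lift hU 0) (isValue_lift hU' 0) (par_lift hUU 0))
        (ihN k hU hU' hUU) (ihL k hU hU' hUU) (ihMs k hU hU' hUU)
  | sigma3 hV hV' hVp hL hN hMs ihV ihL ihN ihMs =>
      intro k U U' hU hU' hUU
      rw [subst_appList, subst_appList]
      simp only [subst]
      rw [← lift_subst_le _ 0 k _ (by omega)]
      exact Par.sigma3 (isValue_subst hV hU k) (isValue_subst hV' hU' k)
        (ihV k hU hU' hUU)
        (ihL (k+1) (isValue_lift hU 0) (isValue_lift hU' 0) (par_lift hUU 0))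
        (ihN k hU hU' hUU) (ihMs k hU hU' hUU)
  | nil => exact List.Forall₂.nil
  | cons hab hl ihab ihl =>
      exact List.Forall₂.cons (ihab _ ‹_› ‹_› ‹_›) (ihl _ ‹_› ‹_› ‹_›)

end Term

namespace Term

lemma not_value_appList (Ms : List Term) : ∀ (A B : Term),
    ¬ isValue (appList (app A B) Ms) := by
  induction Ms with
  | nil => intro A B h; exact h
  | cons N Ns ih => intro A B h; exact ih _ _ h

lemma ipar_par_value {V V' : Term} (hV : isValue V) (h : IPar V V') : Par V V' := by
  cases h with
  | lam h => exact Par.lam h List.Forall₂.nil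
  | var x => exact Par.var x List.Forall₂.nil
  | right _ _ _ _ _ => exact absurd hV (not_value_appList _ _ _)

lemma forall₂_par_subst {Ms Ms' : List Term} (h : List.Forall₂ Par Ms Ms')
    (k : ℕ) {U U' : Term} (hU : isValue U) (hU' : isValue U') (hUU : Par U U') :
    List.Forall₂ Par (Ms.map (fun T => subst T k U)) (Ms'.map (fun T => subst T k U')) := by
  induction h with
  | nil => exact List.Forall₂.nil
  | cons hab _ ih => exact List.Forall₂.cons (par_subst hab k hU hU' hUU) ih

end Term


open Term Relation in
theorem ipar_subst {M M2 V V2 : Term} (k : ℕ) (hV : isValue V) (hV2 : isValue V2)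
    (hM : IPar M M2) (hpV : IPar V V2) :
    IPar (subst M k V) (subst M2 k V2) := by
  have hparV : Par V V2 := ipar_par_value hV hpV
  induction hM generalizing k with
  | lam h =>
      simp only [subst]
      exact IPar.lam (par_subst h (k+1) (isValue_lift hV 0) (isValue_lift hV2 0)
        (par_lift hparV 0))
  | var x =>
      simp only [subst]
      split_ifs
      · exact hpV
      · exact IPar.var _
      · exact IPar.var _
  | right hW hW' hPar hN hMs ihN =>
      rw [subst_appList, subst_appList]
      simp only [subst]
      exact IPar.right (isValue_subst hW hV k) (isValue_subst hW' hV2 k)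
        (par_subst hPar k hV hV2 hparV) (ihN k)
        (forall₂_par_subst hMs k hV hV2 hparV)
end
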